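/- arXiv:1503.06093 — 4 statements merged into one kernel-verified Lean document; each statement's English description precedes it below -/
import Mathlib

section
/- For every real number r > 1 there exists a smooth map f : ℝ² → ℝ² such that M = graph f is an entire spacelike stationary graph in ℝ₁⁴ with inf_{ℝ²} W = r^{-1}, sup_{ℝ²} W = r, and such that for every t ∈ [r^{-1}, r] the level set {x ∈ ℝ² : W(x) = t} is an infinite set. -/
/-! Take `f(x) = s sin x₁ γ(r x₂)` with `γ = (sinh, cosh)` and `r² (1 - s²) = 1`. In `ℝ₁²` the
curve `γ` satisfies `⟨γ, γ⟩ = -1`, `⟨γ', γ'⟩ = 1`, `⟨γ, γ'⟩ = 0`, so the induced metric is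
`diag(1 - s² cos² x₁, 1 + s² r² sin² x₁) = q(x₁) diag(1, r²)` with `q = 1 - s² cos² x₁ ∈ [r⁻², 1]`.
So `W = r q` and `W g⁻¹ = diag(r, r⁻¹)` is constant: the stationarity system collapses to
`r ∂₁²f + r⁻¹ ∂₂²f = 0`, which holds because `sin'' = -sin` and `γ(r·)'' = r² γ(r·)`. Finally
`W = r q` sweeps out `[r⁻¹, r]` (intermediate value theorem) and depends on `x₁` only, so every
value is taken along whole lines. -/

open Matrix MeasureTheory Filter

noncomputable section

/-- Partial derivative `∂F/∂x_i` of a function on `ℝ²`. -/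
def pd (F : (Fin 2 → ℝ) → ℝ) (i : Fin 2) (x : Fin 2 → ℝ) : ℝ :=
  fderiv ℝ F x (Pi.single i 1)

/-- Induced metric matrix of `graph f ⊂ ℝ₁^{2+m}`:
`g_{ij} = δ_{ij} + Σ_{α<m-1} ∂f_α/∂x_i ∂f_α/∂x_j − ∂f_{m}/∂x_i ∂f_{m}/∂x_j`
(the last coordinate is the timelike one). -/
def gMat {m : ℕ} (f : (Fin 2 → ℝ) → (Fin m → ℝ)) (x : Fin 2 → ℝ) :
    Matrix (Fin 2) (Fin 2) ℝ :=
  Matrix.of fun i j => (if i = j then (1:ℝ) else 0)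
    + ∑ α : Fin m, (if (α : ℕ) = m - 1 then (-1:ℝ) else 1)
        * pd (fun y => f y α) i x * pd (fun y => f y α) j x

/-- The W-function `W = √(det g)`. -/
def Wf {m : ℕ} (f : (Fin 2 → ℝ) → (Fin m → ℝ)) (x : Fin 2 → ℝ) : ℝ :=
  Real.sqrt ((gMat f x).det)

/-- The graph of `f` is an entire spacelike graph: `g` is positive definite everywhere. -/
def Spacelike {m : ℕ} (f : (Fin 2 → ℝ) → (Fin m → ℝ)) : Prop :=
  ∀ x, (gMat f x).PosDef

/-- The graph of `f` is stationary (vanishing mean curvature):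
`Σ_i ∂_i(W g^{ij}) = 0` and `Σ_{i,j} ∂_i(W g^{ij} ∂f_α/∂x_j) = 0`. -/
def Stationary {m : ℕ} (f : (Fin 2 → ℝ) → (Fin m → ℝ)) : Prop :=
  (∀ x, ∀ j : Fin 2,
     ∑ i : Fin 2, pd (fun y => Wf f y * (gMat f y)⁻¹ i j) i x = 0) ∧
  (∀ x, ∀ α : Fin m,
     ∑ i : Fin 2, pd (fun y => ∑ j : Fin 2,
        Wf f y * (gMat f y)⁻¹ i j * pd (fun z => f z α) j y) i x = 0)

/-- `f` is affine linear. -/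
def AffineLinear {m : ℕ} (f : (Fin 2 → ℝ) → (Fin m → ℝ)) : Prop :=
  ∃ (L : (Fin 2 → ℝ) →ₗ[ℝ] (Fin m → ℝ)) (c : Fin m → ℝ), ∀ x, f x = L x + c

/-- A real-valued function on `ℝ²` is affine linear. -/
def AffineLinR (h : (Fin 2 → ℝ) → ℝ) : Prop :=
  ∃ (L : (Fin 2 → ℝ) →ₗ[ℝ] ℝ) (c : ℝ), ∀ x, h x = L x + c

/-- `h : ℝ² → ℝ` is harmonic: smooth with `∂²h/∂x₁² + ∂²h/∂x₂² = 0`. -/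
def HarmonicR (h : (Fin 2 → ℝ) → ℝ) : Prop :=
  ContDiff ℝ (⊤ : ℕ∞) h ∧
  ∀ x, pd (fun y => pd h 0 y) 0 x + pd (fun y => pd h 1 y) 1 x = 0

/-- `y` is a lightlike vector of `ℝ₁^m`: `y₁² + ⋯ + y_{m-1}² − y_m² = 0`. -/
def Lightlike {m : ℕ} (y : Fin m → ℝ) : Prop :=
  ∑ α : Fin m, (if (α : ℕ) = m - 1 then (-1:ℝ) else 1) * y α * y α = 0

/-- `f = h·y₀ + y₁` with `h` a nonlinear harmonic function, `y₀` a nonzero lightlike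
vector and `y₁` a constant vector. -/
def LightlikeForm {m : ℕ} (f : (Fin 2 → ℝ) → (Fin m → ℝ)) : Prop :=
  ∃ (h : (Fin 2 → ℝ) → ℝ) (y₀ y₁ : Fin m → ℝ),
    HarmonicR h ∧ ¬ AffineLinR h ∧ Lightlike y₀ ∧ y₀ ≠ 0 ∧
    ∀ x, f x = fun α => h x * y₀ α + y₁ α

/-- The linear change of variables `x₁ = u₁, x₂ = a·u₁ + b·u₂`. -/
def Tmap (a b : ℝ) (u : Fin 2 → ℝ) : Fin 2 → ℝ := ![u 0, a * u 0 + b * u 1]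

/-- Jacobian matrix of `Tmap a b`. -/
def Amat (a b : ℝ) : Matrix (Fin 2) (Fin 2) ℝ := !![1, 0; a, b]

open Real

lemma pd_const (a : ℝ) (i : Fin 2) (x : Fin 2 → ℝ) : pd (fun _ => a) i x = 0 := by
  simp [pd]

lemma pd_const_mul (c : ℝ) (F : (Fin 2 → ℝ) → ℝ) (i : Fin 2) (x : Fin 2 → ℝ) :
    pd (fun y => c * F y) i x = c * pd F i x := by
  have h := congrFun (fderiv_const_smul_field (𝕜 := ℝ) (f := F) c) x
  simp only [pd, ← smul_eq_mul (a := c)]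
  exact congrArg (fun L => L (Pi.single i 1)) h

lemma inv_diagonal_of_ne_zero {n K : Type*} [Fintype n] [DecidableEq n] [Field K] {v : n → K}
    (hv : ∀ i, v i ≠ 0) : (diagonal v)⁻¹ = diagonal v⁻¹ := by
  refine inv_eq_left_inv ?_
  rw [diagonal_mul_diagonal, ← diagonal_one]
  congr 1
  funext i
  simp [hv i]

section Separable

variable {φ ψ : ℝ → ℝ} {φ' ψ' : ℝ} {x : Fin 2 → ℝ}

lemma hasFDerivAt_mul_sep (hφ : HasDerivAt φ φ' (x 0)) (hψ : HasDerivAt ψ ψ' (x 1)) :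
    HasFDerivAt (fun y : Fin 2 → ℝ => φ (y 0) * ψ (y 1))
      (φ (x 0) • ψ' • ContinuousLinearMap.proj (R := ℝ) (φ := fun _ : Fin 2 => ℝ) 1
        + ψ (x 1) • φ' • ContinuousLinearMap.proj (R := ℝ) (φ := fun _ : Fin 2 => ℝ) 0) x :=
  (hφ.comp_hasFDerivAt x (hasFDerivAt_apply 0 x)).mul
    (hψ.comp_hasFDerivAt x (hasFDerivAt_apply 1 x))

lemma pd_zero_mul_sep (hφ : HasDerivAt φ φ' (x 0)) (hψ : HasDerivAt ψ ψ' (x 1)) :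
    pd (fun y => φ (y 0) * ψ (y 1)) 0 x = φ' * ψ (x 1) := by
  simp [pd, (hasFDerivAt_mul_sep hφ hψ).fderiv, mul_comm]

lemma pd_one_mul_sep (hφ : HasDerivAt φ φ' (x 0)) (hψ : HasDerivAt ψ ψ' (x 1)) :
    pd (fun y => φ (y 0) * ψ (y 1)) 1 x = φ (x 0) * ψ' := by
  simp [pd, (hasFDerivAt_mul_sep hφ hψ).fderiv]

end Separable

lemma gMat_two_apply (f : (Fin 2 → ℝ) → (Fin 2 → ℝ)) (x : Fin 2 → ℝ) (i j : Fin 2) :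
    gMat f x i j = (if i = j then 1 else 0) + pd (fun y => f y 0) i x * pd (fun y => f y 0) j x
      - pd (fun y => f y 1) i x * pd (fun y => f y 1) j x := by
  simp only [gMat, of_apply, Fin.sum_univ_two, Fin.isValue, Fin.coe_ofNat_eq_mod, Nat.zero_mod,
    Nat.mod_succ, Nat.add_one_sub_one, zero_ne_one, ↓reduceIte]
  ring

theorem stationary_of_smul_inv_eq_diagonal {m : ℕ} {f : (Fin 2 → ℝ) → (Fin m → ℝ)} {a b : ℝ}
    (hD : ∀ y, Wf f y • (gMat f y)⁻¹ = diagonal ![a, b])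
    (hf : ∀ x α, a * pd (fun y => pd (fun z => f z α) 0 y) 0 x
        + b * pd (fun y => pd (fun z => f z α) 1 y) 1 x = 0) :
    Stationary f := by
  have hcoef (i j : Fin 2) (y) : Wf f y * (gMat f y)⁻¹ i j = diagonal ![a, b] i j := by
    rw [← hD y]; rfl
  refine ⟨fun x j => by simp only [hcoef, pd_const, Finset.sum_const_zero], fun x α => ?_⟩
  simp only [hcoef, diagonal_apply, ite_mul, zero_mul, Finset.sum_ite_eq, Finset.mem_univ,
    if_true, Fin.sum_univ_two, pd_const_mul]
  exact hf x α

def sinCoshMap (s r : ℝ) (x : Fin 2 → ℝ) : Fin 2 → ℝ :=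
  ![s * sin (x 0) * sinh (r * x 1), s * sin (x 0) * cosh (r * x 1)]

section sinCoshMap

variable (s r : ℝ) (x : Fin 2 → ℝ)

lemma hasDerivAt_const_mul_sin (t : ℝ) : HasDerivAt (fun t => s * sin t) (s * cos t) t :=
  (hasDerivAt_sin t).const_mul s

lemma hasDerivAt_const_mul_cos (t : ℝ) : HasDerivAt (fun t => s * cos t) (-(s * sin t)) t := by
  simpa using (hasDerivAt_cos t).const_mul s

lemma hasDerivAt_sinh_const_mul (t : ℝ) :
    HasDerivAt (fun t => sinh (r * t)) (r * cosh (r * t)) t := by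
  simpa [mul_comm] using ((hasDerivAt_id t).const_mul r).sinh

lemma hasDerivAt_cosh_const_mul (t : ℝ) :
    HasDerivAt (fun t => cosh (r * t)) (r * sinh (r * t)) t := by
  simpa [mul_comm] using ((hasDerivAt_id t).const_mul r).cosh

lemma pd_sinCoshMap_zero_zero :
    pd (fun y => sinCoshMap s r y 0) 0 x = s * cos (x 0) * sinh (r * x 1) :=
  pd_zero_mul_sep (hasDerivAt_const_mul_sin s _) (hasDerivAt_sinh_const_mul r _)

lemma pd_sinCoshMap_zero_one :
    pd (fun y => sinCoshMap s r y 0) 1 x = s * sin (x 0) * (r * cosh (r * x 1)) :=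
  pd_one_mul_sep (hasDerivAt_const_mul_sin s _) (hasDerivAt_sinh_const_mul r _)

lemma pd_sinCoshMap_one_zero :
    pd (fun y => sinCoshMap s r y 1) 0 x = s * cos (x 0) * cosh (r * x 1) :=
  pd_zero_mul_sep (hasDerivAt_const_mul_sin s _) (hasDerivAt_cosh_const_mul r _)

lemma pd_sinCoshMap_one_one :
    pd (fun y => sinCoshMap s r y 1) 1 x = s * sin (x 0) * (r * sinh (r * x 1)) :=
  pd_one_mul_sep (hasDerivAt_const_mul_sin s _) (hasDerivAt_cosh_const_mul r _)

lemma gMat_sinCoshMap :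
    gMat (sinCoshMap s r) x =
      diagonal ![1 - s ^ 2 * cos (x 0) ^ 2, 1 + s ^ 2 * r ^ 2 * sin (x 0) ^ 2] := by
  have hch := cosh_sq_sub_sinh_sq (r * x 1)
  ext i j
  revert i j
  simp only [Fin.forall_fin_two, gMat_two_apply, pd_sinCoshMap_zero_zero, pd_sinCoshMap_zero_one,
    pd_sinCoshMap_one_zero, pd_sinCoshMap_one_one, diagonal_apply_eq,
    diagonal_apply_ne _ zero_ne_one, diagonal_apply_ne _ one_ne_zero, if_true, zero_ne_one, one_ne_zero, if_false, cons_val_zero,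
    cons_val_one, cons_val_fin_one]
  refine ⟨⟨?_, ?_⟩, ?_, ?_⟩
  · linear_combination (-(s ^ 2 * cos (x 0) ^ 2)) * hch
  · ring
  · ring
  · linear_combination (s ^ 2 * r ^ 2 * sin (x 0) ^ 2) * hch

lemma contDiff_sinCoshMap : ContDiff ℝ (⊤ : ℕ∞) (sinCoshMap s r) :=
  contDiff_pi.2 <| Fin.forall_fin_two.2
    ⟨by simp only [sinCoshMap, cons_val_zero]; fun_prop,
      by simp only [sinCoshMap, cons_val_one, cons_val_fin_one]; fun_prop⟩

variable {s r}

lemma gMat_sinCoshMap_of_sq (hs : r ^ 2 * (1 - s ^ 2) = 1) :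
    gMat (sinCoshMap s r) x =
      diagonal ![1 - s ^ 2 * cos (x 0) ^ 2, r ^ 2 * (1 - s ^ 2 * cos (x 0) ^ 2)] := by
  rw [gMat_sinCoshMap]
  congr 3
  linear_combination (s ^ 2 * r ^ 2) * sin_sq_add_cos_sq (x 0) - hs

lemma one_sub_sq_pos (hs : r ^ 2 * (1 - s ^ 2) = 1) : 0 < 1 - s ^ 2 :=
  pos_of_mul_pos_right (by rw [hs]; exact one_pos) (sq_nonneg r)

lemma one_sub_sq_le_one_sub_sq_mul_cos_sq (t : ℝ) : 1 - s ^ 2 ≤ 1 - s ^ 2 * cos t ^ 2 := by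
  nlinarith [cos_sq_le_one t, sq_nonneg s]

lemma one_sub_sq_mul_cos_sq_le_one (t : ℝ) : 1 - s ^ 2 * cos t ^ 2 ≤ 1 := by
  nlinarith [sq_nonneg (cos t), sq_nonneg s]

lemma one_sub_sq_mul_cos_sq_pos (hs : r ^ 2 * (1 - s ^ 2) = 1) (t : ℝ) :
    0 < 1 - s ^ 2 * cos t ^ 2 :=
  (one_sub_sq_pos hs).trans_le (one_sub_sq_le_one_sub_sq_mul_cos_sq t)

lemma spacelike_sinCoshMap (hs : r ^ 2 * (1 - s ^ 2) = 1) : Spacelike (sinCoshMap s r) := by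
  intro x
  have hq := one_sub_sq_mul_cos_sq_pos hs (x 0)
  have hr : 0 < r ^ 2 := pos_of_mul_pos_left (by rw [hs]; exact one_pos) (one_sub_sq_pos hs).le
  simp only [gMat_sinCoshMap_of_sq x hs, posDef_diagonal_iff, Fin.forall_fin_two]
  exact ⟨hq, mul_pos hr hq⟩

lemma Wf_sinCoshMap (hr : 0 ≤ r) (hs : r ^ 2 * (1 - s ^ 2) = 1) :
    Wf (sinCoshMap s r) x = r * (1 - s ^ 2 * cos (x 0) ^ 2) := by
  have hq := one_sub_sq_mul_cos_sq_pos hs (x 0)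
  rw [Wf, gMat_sinCoshMap_of_sq x hs, det_diagonal, Fin.prod_univ_two, cons_val_zero, cons_val_one,
    cons_val_fin_one, ← sqrt_sq (mul_nonneg hr hq.le)]
  ring_nf

lemma smul_inv_gMat_sinCoshMap (hr : 0 < r) (hs : r ^ 2 * (1 - s ^ 2) = 1) :
    Wf (sinCoshMap s r) x • (gMat (sinCoshMap s r) x)⁻¹ = diagonal ![r, r⁻¹] := by
  have hq := one_sub_sq_mul_cos_sq_pos hs (x 0)
  have hr2 : r ^ 2 * (1 - s ^ 2 * cos (x 0) ^ 2) ≠ 0 := by positivity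
  rw [Wf_sinCoshMap x hr.le hs, gMat_sinCoshMap_of_sq x hs,
    inv_diagonal_of_ne_zero (Fin.forall_fin_two.2 ⟨hq.ne', hr2⟩), ← diagonal_smul]
  congr 1
  ext i
  fin_cases i <;> simp [field]

lemma stationary_sinCoshMap (hr : 0 < r) (hs : r ^ 2 * (1 - s ^ 2) = 1) :
    Stationary (sinCoshMap s r) := by
  refine stationary_of_smul_inv_eq_diagonal (smul_inv_gMat_sinCoshMap · hr hs)
    fun x => Fin.forall_fin_two.2 ⟨?_, ?_⟩
  · rw [funext (pd_sinCoshMap_zero_zero s r), funext (pd_sinCoshMap_zero_one s r),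
      pd_zero_mul_sep (hasDerivAt_const_mul_cos s _) (hasDerivAt_sinh_const_mul r _),
      pd_one_mul_sep (hasDerivAt_const_mul_sin s _) ((hasDerivAt_cosh_const_mul r _).const_mul r)]
    field_simp
    ring
  · rw [funext (pd_sinCoshMap_one_zero s r), funext (pd_sinCoshMap_one_one s r),
      pd_zero_mul_sep (hasDerivAt_const_mul_cos s _) (hasDerivAt_cosh_const_mul r _),
      pd_one_mul_sep (hasDerivAt_const_mul_sin s _) ((hasDerivAt_sinh_const_mul r _).const_mul r)]
    field_simp
    ring

lemma inv_eq_mul_one_sub_sq (hr : r ≠ 0) (hs : r ^ 2 * (1 - s ^ 2) = 1) :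
    r⁻¹ = r * (1 - s ^ 2) := by
  field_simp
  linear_combination -hs

lemma Wf_sinCoshMap_mem_Icc (hr : 0 < r) (hs : r ^ 2 * (1 - s ^ 2) = 1) :
    Wf (sinCoshMap s r) x ∈ Set.Icc r⁻¹ r := by
  rw [Wf_sinCoshMap x hr.le hs, inv_eq_mul_one_sub_sq hr.ne' hs]
  exact ⟨mul_le_mul_of_nonneg_left (one_sub_sq_le_one_sub_sq_mul_cos_sq _) hr.le,
    mul_le_of_le_one_right hr.le (one_sub_sq_mul_cos_sq_le_one _)⟩

lemma iInf_Wf_sinCoshMap (hr : 0 < r) (hs : r ^ 2 * (1 - s ^ 2) = 1) :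
    ⨅ x, Wf (sinCoshMap s r) x = r⁻¹ := by
  have h0 : Wf (sinCoshMap s r) 0 = r⁻¹ := by
    rw [Wf_sinCoshMap _ hr.le hs, inv_eq_mul_one_sub_sq hr.ne' hs]
    simp
  exact ciInf_eq_of_forall_ge_of_forall_gt_exists_lt (fun x => (Wf_sinCoshMap_mem_Icc x hr hs).1)
    fun w hw => ⟨0, h0 ▸ hw⟩

lemma iSup_Wf_sinCoshMap (hr : 0 < r) (hs : r ^ 2 * (1 - s ^ 2) = 1) :
    ⨆ x, Wf (sinCoshMap s r) x = r := by
  have h0 : Wf (sinCoshMap s r) (fun _ => π / 2) = r := by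
    simp [Wf_sinCoshMap _ hr.le hs]
  exact ciSup_eq_of_forall_le_of_forall_lt_exists_gt (fun x => (Wf_sinCoshMap_mem_Icc x hr hs).2)
    fun w hw => ⟨_, h0 ▸ hw⟩

lemma infinite_setOf_Wf_sinCoshMap_eq (hr : 0 < r) (hs : r ^ 2 * (1 - s ^ 2) = 1) {t : ℝ}
    (ht : t ∈ Set.Icc r⁻¹ r) : {x | Wf (sinCoshMap s r) x = t}.Infinite := by
  have hcont : Continuous fun θ => r * (1 - s ^ 2 * cos θ ^ 2) := by fun_prop
  obtain ⟨θ, -, hθ⟩ : ∃ θ ∈ Set.Icc 0 (π / 2), r * (1 - s ^ 2 * cos θ ^ 2) = t := by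
    refine intermediate_value_Icc (by positivity) hcont.continuousOn ?_
    simpa [← inv_eq_mul_one_sub_sq hr.ne' hs] using ht
  refine Set.infinite_of_injective_forall_mem (f := fun u : ℝ => ![θ, u]) ?_ fun u => ?_
  · intro a b h
    simpa using congrFun h 1
  · simp [Wf_sinCoshMap _ hr.le hs, hθ]

end sinCoshMap

/-- for every `r > 1` there is an entire spacelike stationary graph in
`ℝ₁⁴` with `inf W = r⁻¹`, `sup W = r`, taking every value of `[r⁻¹, r]` infinitely
often. -/
theorem stmt5 (r : ℝ) (hr : 1 < r) :
    ∃ f : (Fin 2 → ℝ) → (Fin 2 → ℝ),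
      ContDiff ℝ (⊤ : ℕ∞) f ∧ Spacelike f ∧ Stationary f ∧
      (⨅ x, Wf f x) = r⁻¹ ∧ (⨆ x, Wf f x) = r ∧
      ∀ t ∈ Set.Icc r⁻¹ r, {x : Fin 2 → ℝ | Wf f x = t}.Infinite := by
  have hr0 : 0 < r := one_pos.trans hr
  set s := √(1 - (r ^ 2)⁻¹)
  have hs : r ^ 2 * (1 - s ^ 2) = 1 := by
    have : (r ^ 2)⁻¹ ≤ 1 := inv_le_one_of_one_le₀ (one_le_pow₀ hr.le)
    rw [sq_sqrt (sub_nonneg.2 this)]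
    field_simp
    ring
  exact ⟨sinCoshMap s r, contDiff_sinCoshMap s r, spacelike_sinCoshMap hs,
    stationary_sinCoshMap hr0 hs, iInf_Wf_sinCoshMap hr0 hs, iSup_Wf_sinCoshMap hr0 hs,
    fun t ht => infinite_setOf_Wf_sinCoshMap_eq hr0 hs ht⟩
end
end

section
/- Let h₁, h₂ : ℂ → ℂ be entire (holomorphic on all of ℂ) functions satisfying h₁(z)² − h₂(z)² = 1 for all z ∈ ℂ. Then there exists an entire function β : ℂ → ℂ such that h₁(z) = cosh(β(z)) and h₂(z) = sinh(β(z)) for all z ∈ ℂ. -/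
/-!
Since `(h₁ + h₂)(h₁ - h₂) = 1`, the entire function `h₁ + h₂` has no zeros, so it has an entire
logarithm `β`: integrate the logarithmic derivative `(h₁ + h₂)' / (h₁ + h₂)` and fix the constant
at `0`. Then `exp (-β) = h₁ - h₂`, and `h₁`, `h₂` are the half sum and half difference of
`exp β` and `exp (-β)`.
-/

open Complex

theorem Complex.exists_differentiable_exp_eq {f : ℂ → ℂ} (hf : Differentiable ℂ f)
    (hf₀ : ∀ z, f z ≠ 0) : ∃ β : ℂ → ℂ, Differentiable ℂ β ∧ ∀ z, exp (β z) = f z := by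
  obtain ⟨β, hβ₀, hβ⟩ :=
    (hf.deriv.div hf hf₀).isExactOn_univ.with_val_at 0 (log (f 0))
  have hβ' : ∀ z, HasDerivAt β (deriv f z / f z) z := fun z => hβ z trivial
  have hquot : ∀ z, HasDerivAt (fun w => f w * exp (-β w)) 0 z := by
    intro z
    refine ((hf z).hasDerivAt.mul (hβ' z).neg.cexp).congr_deriv ?_
    field_simp [hf₀ z]
    ring
  have hconst : ∀ z, f z * exp (-β z) = 1 := by
    intro z
    rw [is_const_of_deriv_eq_zero (fun w => (hquot w).differentiableAt)
      (fun w => (hquot w).deriv) z 0, hβ₀, exp_neg, exp_log (hf₀ 0), mul_inv_cancel₀ (hf₀ 0)]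
  refine ⟨β, fun z => (hβ' z).differentiableAt, fun z => ?_⟩
  rw [← mul_one (exp (β z)), ← hconst z, exp_neg]
  field_simp [exp_ne_zero (β z)]

theorem Complex.cosh_eq_and_sinh_eq_of_exp_eq_add {a b w : ℂ} (hab : a ^ 2 - b ^ 2 = 1)
    (hw : exp w = a + b) : a = cosh w ∧ b = sinh w := by
  have hw' : exp (-w) = a - b := by
    rw [exp_neg, hw]
    exact inv_eq_of_mul_eq_one_right (by linear_combination hab)
  constructor
  · linear_combination -(hw + hw' + two_cosh (x := w)) / 2
  · linear_combination (hw' - hw - two_sinh (x := w)) / 2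

/-- if `h₁, h₂` are entire with `h₁² − h₂² ≡ 1` then `h₁ = cosh β`,
`h₂ = sinh β` for some entire function `β`. -/
theorem stmt13 (h₁ h₂ : ℂ → ℂ)
    (hh₁ : Differentiable ℂ h₁) (hh₂ : Differentiable ℂ h₂)
    (heq : ∀ z : ℂ, h₁ z ^ 2 - h₂ z ^ 2 = 1) :
    ∃ β : ℂ → ℂ, Differentiable ℂ β ∧
      ∀ z : ℂ, h₁ z = Complex.cosh (β z) ∧ h₂ z = Complex.sinh (β z) := by
  have hsum₀ : ∀ z, h₁ z + h₂ z ≠ 0 := fun z hz =>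
    one_ne_zero <| by linear_combination (h₁ z - h₂ z) * hz - heq z
  obtain ⟨β, hβ, hexp⟩ := exists_differentiable_exp_eq (hh₁.add hh₂) hsum₀
  exact ⟨β, hβ, fun z => cosh_eq_and_sinh_eq_of_exp_eq_add (heq z) (hexp z)⟩
end

section
/- There exists a smooth function f : ℝ² → ℝ with |∇f(x)| < 1 for all x ∈ ℝ² (so that M = graph f is an entire spacelike graph in the Minkowski space ℝ₁³, with induced metric matrix g(x) = I₂ − ∇f(x)·∇f(x)ᵀ positive definite everywhere), together with a C¹ curve γ : ℝ → ℝ² with ‖γ(t)‖ → ∞ as t → ±∞, whose induced length is finite: ∫_{−∞}^{+∞} √( Σ_{i,j} g_{ij}(γ(t)) γᵢ'(t) γⱼ'(t) ) dt < +∞. In particular, an entire spacelike graph in a Minkowski space need not be complete. -/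
open Matrix MeasureTheory Filter

noncomputable section

/-! The graph of `f(x) = log cosh x₁` is spacelike, since `∇f = (tanh x₁, 0)`, but its slope
tends to the speed of light along the `x₁`-axis: on the line `γ(t) = (t, 0)` the length element
is `√(1 - tanh² t) = 1 / cosh t`, which is integrable over `ℝ`. -/

open Real

theorem pd_comp_apply {g : ℝ → ℝ} {g' : ℝ} {x : Fin 2 → ℝ} {i : Fin 2}
    (hg : HasDerivAt g g' (x i)) (j : Fin 2) :
    pd (fun y => g (y i)) j x = (Pi.single i g' : Fin 2 → ℝ) j := by
  have hF : HasFDerivAt (fun y : Fin 2 → ℝ => g (y i))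
      (g' • ContinuousLinearMap.proj (R := ℝ) (φ := fun _ : Fin 2 => ℝ) i) x :=
    hg.comp_hasFDerivAt x (hasFDerivAt_apply i x)
  rw [pd, hF.fderiv]
  rcases eq_or_ne j i with rfl | h <;> simp [*]

theorem deriv_pi_single_apply {ι : Type*} [DecidableEq ι] (i j : ι) (t : ℝ) :
    deriv (fun s => (Pi.single i s : ι → ℝ) j) t = (Pi.single i 1 : ι → ℝ) j := by
  rcases eq_or_ne j i with rfl | h <;> simp [*]

theorem quadForm_one_sub_outer_single {ι : Type*} [Fintype ι] [DecidableEq ι]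
    (a : ι → ℝ) (k : ι) :
    ∑ i, ∑ j, ((if i = j then (1 : ℝ) else 0) - a i * a j)
      * (Pi.single k 1 : ι → ℝ) i * (Pi.single k 1 : ι → ℝ) j = 1 - a k ^ 2 := by
  simp [Pi.single_apply, sq]

theorem one_sub_tanh_sq (t : ℝ) : 1 - tanh t ^ 2 = (cosh t ^ 2)⁻¹ := by
  have hc := (cosh_pos t).ne'
  rw [tanh_eq_sinh_div_cosh]
  field_simp
  linarith [cosh_sq_sub_sinh_sq t]

theorem inv_cosh_le_four_mul_inv_one_add_sq (t : ℝ) : (cosh t)⁻¹ ≤ 4 * (1 + t ^ 2)⁻¹ := by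
  have hexp : 1 + |t| + |t| ^ 2 / 2 ≤ exp |t| := quadratic_le_exp_of_nonneg (abs_nonneg t)
  have hcosh : (1 + t ^ 2) / 4 ≤ cosh t := by
    rw [← cosh_abs, cosh_eq]
    nlinarith [exp_pos (-|t|), abs_nonneg t, sq_abs t]
  calc (cosh t)⁻¹ ≤ ((1 + t ^ 2) / 4)⁻¹ := inv_anti₀ (by positivity) hcosh
    _ = 4 * (1 + t ^ 2)⁻¹ := by rw [inv_div, div_eq_mul_inv]

theorem integrable_inv_cosh : Integrable fun t : ℝ => (cosh t)⁻¹ :=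
  (integrable_inv_one_add_sq.const_mul 4).mono'
    (continuous_cosh.inv₀ fun t => (cosh_pos t).ne').aestronglyMeasurable
    (Eventually.of_forall fun t => by
      rw [norm_inv, norm_of_nonneg (cosh_pos t).le]
      exact inv_cosh_le_four_mul_inv_one_add_sq t)

theorem hasDerivAt_log_cosh (t : ℝ) : HasDerivAt (fun s => log (cosh s)) (tanh t) t := by
  simpa [tanh_eq_sinh_div_cosh] using (hasDerivAt_cosh t).log (cosh_pos t).ne'

/-- there is an entire spacelike graph in `ℝ₁³` (given by `f` with
`|∇f| < 1`) which is not complete: some C¹ curve going to infinity in `ℝ²` has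
finite induced length. -/
theorem stmt16 :
    ∃ f : (Fin 2 → ℝ) → ℝ, ContDiff ℝ (⊤ : ℕ∞) f ∧
      (∀ x, (pd f 0 x) ^ 2 + (pd f 1 x) ^ 2 < 1) ∧
      ∃ γ : ℝ → (Fin 2 → ℝ), ContDiff ℝ 1 γ ∧
        Tendsto (fun t => ‖γ t‖) atTop atTop ∧
        Tendsto (fun t => ‖γ t‖) atBot atTop ∧
        ∫⁻ t : ℝ, ENNReal.ofReal (Real.sqrt (∑ i : Fin 2, ∑ j : Fin 2,
          ((if i = j then (1:ℝ) else 0) - pd f i (γ t) * pd f j (γ t))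
            * deriv (fun s => γ s i) t * deriv (fun s => γ s j) t)) < ⊤ := by
  have hpd (x : Fin 2 → ℝ) (j : Fin 2) :
      pd (fun y => log (cosh (y 0))) j x = (Pi.single 0 (tanh (x 0)) : Fin 2 → ℝ) j :=
    pd_comp_apply (hasDerivAt_log_cosh (x 0)) j
  refine ⟨fun x => log (cosh (x 0)), ?_, fun x => ?_, fun t => Pi.single 0 t, ?_, ?_, ?_, ?_⟩
  · exact (contDiff_cosh.comp (contDiff_apply ℝ ℝ 0)).log fun x => (cosh_pos (x 0)).ne'
  · simpa [hpd] using tanh_sq_lt_one (x 0)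
  · exact (ContinuousLinearMap.single ℝ (fun _ : Fin 2 => ℝ) 0).contDiff
  · simpa [Pi.norm_single] using tendsto_abs_atTop_atTop
  · simpa [Pi.norm_single] using tendsto_abs_atBot_atTop
  · have hlength (t : ℝ) : √(∑ i : Fin 2, ∑ j : Fin 2,
        ((if i = j then (1:ℝ) else 0) - pd (fun y => log (cosh (y 0))) i (Pi.single 0 t)
          * pd (fun y => log (cosh (y 0))) j (Pi.single 0 t))
          * deriv (fun s => (Pi.single 0 s : Fin 2 → ℝ) i) t
          * deriv (fun s => (Pi.single 0 s : Fin 2 → ℝ) j) t) = (cosh t)⁻¹ := by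
      simp only [deriv_pi_single_apply, quadForm_one_sub_outer_single, hpd]
      simp [one_sub_tanh_sq, sqrt_inv, sqrt_sq (cosh_pos t).le]
    simp only [hlength]
    exact integrable_inv_cosh.lintegral_lt_top
end
end

section
/- Let m ≥ 2, let y₀ ∈ ℝ^m be a nonzero lightlike vector for the Minkowski product on ℝ₁^m (i.e. y₀₁² + ⋯ + y₀_{m−1}² = y₀_m²), let h : ℝ² → ℝ be any smooth function, and set f = h·y₀ : ℝ² → ℝ^m. Then the induced metric matrix of the graph of f in ℝ₁^{2+m} is the identity: g_{ij}(x) = δ_{ij} for all x ∈ ℝ² and i,j ∈ {1,2}. In particular, taking h nonlinear yields an entire spacelike graph in ℝ₁^{2+m} whose orthogonal projection onto the coordinate plane ℝ² is an isometry but which is not an affine plane. -/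
open Matrix MeasureTheory Filter

noncomputable section

/- No differentiability is needed: when `F` is not differentiable at `x` and `c ≠ 0`, both sides
are the junk value `0`. -/
lemma pd_mul_const (F : (Fin 2 → ℝ) → ℝ) (c : ℝ) (i : Fin 2) (x : Fin 2 → ℝ) :
    pd (fun y => F y * c) i x = pd F i x * c := by
  have hF : (fun y => F y * c) = c • F := by
    ext y
    exact mul_comm _ _
  rw [pd, hF, fderiv_const_smul_field, pd, Pi.smul_apply, _root_.smul_apply,
    smul_eq_mul, mul_comm]

theorem gMat_mul_const {m : ℕ} (F : (Fin 2 → ℝ) → ℝ) (y : Fin m → ℝ) (x : Fin 2 → ℝ) :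
    gMat (fun x α => F x * y α) x =
      1 + (∑ α : Fin m, (if (α : ℕ) = m - 1 then (-1:ℝ) else 1) * y α * y α) •
        vecMulVec (fun i => pd F i x) (fun i => pd F i x) := by
  ext i j
  simp only [gMat, of_apply, pd_mul_const, Matrix.add_apply, one_apply, Matrix.smul_apply,
    vecMulVec_apply, smul_eq_mul, Finset.sum_mul]
  congr 1
  exact Finset.sum_congr rfl fun α _ => by ring

theorem gMat_mul_const_of_lightlike {m : ℕ} (F : (Fin 2 → ℝ) → ℝ) {y : Fin m → ℝ}
    (hy : Lightlike y) (x : Fin 2 → ℝ) : gMat (fun x α => F x * y α) x = 1 := by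
  rw [gMat_mul_const, show _ = (0 : ℝ) from hy, zero_smul, add_zero]

theorem affineLinR_of_affineLinear_mul_const {m : ℕ} {F : (Fin 2 → ℝ) → ℝ} {y : Fin m → ℝ}
    {α : Fin m} (hα : y α ≠ 0) (hF : AffineLinear fun x β => F x * y β) : AffineLinR F := by
  obtain ⟨L, c, hL⟩ := hF
  refine ⟨(y α)⁻¹ • (LinearMap.proj α).comp L, c α / y α, fun x => ?_⟩
  have hx : F x * y α = L x α + c α := congrFun (hL x) α
  simp only [LinearMap.smul_apply, LinearMap.coe_comp, Function.comp_apply,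
    LinearMap.proj_apply, smul_eq_mul]
  field_simp
  exact hx

theorem stmt17_general {m : ℕ} (y₀ : Fin m → ℝ)
    (hly : Lightlike y₀) (hy : y₀ ≠ 0)
    (h : (Fin 2 → ℝ) → ℝ) :
    (∀ x, gMat (fun x α => h x * y₀ α) x = (1 : Matrix (Fin 2) (Fin 2) ℝ)) ∧
    (¬ AffineLinR h → ¬ AffineLinear (fun x α => h x * y₀ α)) := by
  obtain ⟨α, hα⟩ : ∃ α, y₀ α ≠ 0 := Function.ne_iff.mp hy
  exact ⟨gMat_mul_const_of_lightlike h hly, fun hh hf =>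
    hh (affineLinR_of_affineLinear_mul_const hα hf)⟩

/-- for a nonzero lightlike `y₀ ∈ ℝ₁^m` and any smooth `h : ℝ² → ℝ`,
the graph of `f = h·y₀` has induced metric the identity; in particular, if `h` is
nonlinear this gives an entire spacelike graph whose projection to `ℝ²` is an
isometry but which is not an affine plane. -/
theorem stmt17 {m : ℕ} (hm : 2 ≤ m) (y₀ : Fin m → ℝ)
    (hly : Lightlike y₀) (hy : y₀ ≠ 0)
    (h : (Fin 2 → ℝ) → ℝ) (hh : ContDiff ℝ (⊤ : ℕ∞) h) :
    (∀ x, gMat (fun x α => h x * y₀ α) x = (1 : Matrix (Fin 2) (Fin 2) ℝ)) ∧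
    (¬ AffineLinR h → ¬ AffineLinear (fun x α => h x * y₀ α)) :=
  stmt17_general y₀ hly hy h
end
end
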